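/- For every integer m ≥ 0 and every real t ≥ 0, the series Σ_{n≥0} φ²_{n,m} t^n converges if and only if t ≤ 2/27. -/
import Mathlib


/-- The number of rooted type II triangulations of a disc with m+2 boundary
vertices and n internal vertices. -/
noncomputable def phi2 (n m : ℕ) : ℝ :=
  (2 ^ (n + 1) * Nat.factorial (2 * m + 1) * Nat.factorial (2 * m + 3 * n) : ℝ) /
    ((Nat.factorial m) ^ 2 * Nat.factorial n * Nat.factorial (2 * m + 2 * n + 2))

lemma phi2_pos (n m : ℕ) : 0 < phi2 n m := by
  unfold phi2
  have h1 := Nat.factorial_pos m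
  have h2 := Nat.factorial_pos n
  have h3 := Nat.factorial_pos (2 * m + 2 * n + 2)
  positivity

lemma phi2_succ (n m : ℕ) :
    phi2 (n + 1) m * ((n + 1) * (2 * m + 2 * n + 3) * (2 * m + 2 * n + 4) : ℝ) =
      phi2 n m * (2 * ((2 * m + 3 * n + 1) * (2 * m + 3 * n + 2) * (2 * m + 3 * n + 3))) := by
  unfold phi2
  have e1 : 2 * m + 3 * (n + 1) = (2 * m + 3 * n) + 1 + 1 + 1 := by ring
  have e2 : 2 * m + 2 * (n + 1) + 2 = (2 * m + 2 * n + 2) + 1 + 1 := by ring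
  rw [e1, e2]
  simp only [Nat.factorial_succ]
  push_cast
  have h1 : (Nat.factorial m : ℝ) ≠ 0 := Nat.cast_ne_zero.2 (Nat.factorial_ne_zero m)
  have h2 : (Nat.factorial n : ℝ) ≠ 0 := Nat.cast_ne_zero.2 (Nat.factorial_ne_zero n)
  have h3 : (Nat.factorial (2 * m + 2 * n + 2) : ℝ) ≠ 0 :=
    Nat.cast_ne_zero.2 (Nat.factorial_ne_zero _)
  field_simp
  ring

lemma ineq_lower (n m : ℕ) :
    27 * n * ((n + 1) * (2 * m + 2 * n + 3) * (2 * m + 2 * n + 4)) ≤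
      4 * ((2 * m + 3 * n + 1) * (2 * m + 3 * n + 2) * (2 * m + 3 * n + 3)) * (n + 3) := by
  refine Nat.le.intro (k := 54*n^3 + (36*m^2+342*m+78)*n^2 + (32*m^3+420*m^2+574*m+96)*n
    + (96*m^3+288*m^2+264*m+72)) ?_
  ring

lemma ineq_upper (m k : ℕ) (n : ℕ) (hn : n = (2 * m + 2) ^ 2 + k) :
    4 * ((2 * m + 3 * n + 1) * (2 * m + 3 * n + 2) * (2 * m + 3 * n + 3)) * (n + 1) ^ 2 ≤
      27 * ((n + 1) * (2 * m + 2 * n + 3) * (2 * m + 2 * n + 4)) * n ^ 2 := by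
  subst hn
  refine Nat.le.intro (k := 12120 + 91112*m + 305488*m^2 + 595040*m^3 + 735232*m^4 + 589600*m^5
    + 299584*m^6 + 88192*m^7 + 11520*m^8 + 13644*k + 75296*k*m + 178064*k*m^2 + 230288*k*m^3
    + 171520*k*m^4 + 69728*k*m^5 + 12096*k*m^6 + 5364*k^2 + 19442*k^2*m + 27732*k^2*m^2
    + 18328*k^2*m^3 + 4752*k^2*m^4 + 894*k^3 + 1602*k^3*m + 828*k^3*m^2 + 54*k^4) ?_
  ring

/-- At the boundary point the series is summable. -/
lemma summable_boundary (m : ℕ) :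
    Summable (fun n : ℕ => phi2 n m * (2 / 27 : ℝ) ^ n) := by
  set N := (2 * m + 2) ^ 2 with hN
  set a : ℕ → ℝ := fun n => phi2 n m * (2 / 27 : ℝ) ^ n with ha
  -- decreasing step for b n = a n * n^2, n ≥ N
  have step : ∀ n, N ≤ n → a (n + 1) * ((n : ℝ) + 1) ^ 2 ≤ a n * (n : ℝ) ^ 2 := by
    intro n hn
    have hden : (0 : ℝ) < (n + 1) * (2 * m + 2 * n + 3) * (2 * m + 2 * n + 4) := by positivity
    have hp : phi2 (n + 1) m =
        phi2 n m * (2 * ((2 * m + 3 * n + 1) * (2 * m + 3 * n + 2) * (2 * m + 3 * n + 3))) /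
          ((n + 1) * (2 * m + 2 * n + 3) * (2 * m + 2 * n + 4)) := by
      rw [eq_div_iff hden.ne']
      exact phi2_succ n m
    have key : (4 * ((2 * m + 3 * n + 1) * (2 * m + 3 * n + 2) * (2 * m + 3 * n + 3))
        * (n + 1) ^ 2 : ℝ) ≤ 27 * ((n + 1) * (2 * m + 2 * n + 3) * (2 * m + 2 * n + 4)) * n ^ 2 := by
      exact_mod_cast ineq_upper m (n - N) n (by omega)
    have hC : (0 : ℝ) ≤ phi2 n m * (2 / 27 : ℝ) ^ n := by
      have := (phi2_pos n m).le; positivity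
    have H := mul_le_mul_of_nonneg_left key hC
    simp only [ha]
    rw [hp, pow_succ]
    rw [div_mul_eq_mul_div, div_mul_eq_mul_div, div_le_iff₀ hden]
    nlinarith [H]
  -- b (N + k) ≤ b N
  have mono : ∀ k, a (N + k) * ((N + k : ℕ) : ℝ) ^ 2 ≤ a N * (N : ℝ) ^ 2 := by
    intro k
    induction k with
    | zero => simp
    | succ k ih =>
      have h2 := step (N + k) (Nat.le_add_right N k)
      calc a (N + (k + 1)) * ((N + (k + 1) : ℕ) : ℝ) ^ 2
          = a ((N + k) + 1) * (((N + k : ℕ) : ℝ) + 1) ^ 2 := by push_cast; ring_nf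
        _ ≤ a (N + k) * ((N + k : ℕ) : ℝ) ^ 2 := h2
        _ ≤ a N * (N : ℝ) ^ 2 := ih
  have hN1 : 1 ≤ N := Nat.one_le_iff_ne_zero.2 (pow_ne_zero _ (by omega))
  -- summable comparison
  have base : Summable (fun n : ℕ => 1 / (n : ℝ) ^ 2) := Real.summable_one_div_nat_pow.2 one_lt_two
  have base' : Summable (fun k : ℕ => a N * (N : ℝ) ^ 2 * (1 / ((k + N : ℕ) : ℝ) ^ 2)) :=
    ((summable_nat_add_iff N).2 base).mul_left _
  have tail : Summable (fun k : ℕ => a (k + N)) := by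
    refine Summable.of_nonneg_of_le (fun k => ?_) (fun k => ?_) base'
    · have := (phi2_pos (k + N) m).le
      simp only [ha]; positivity
    · have hpos : (0 : ℝ) < ((k + N : ℕ) : ℝ) ^ 2 := by
        have : (1 : ℝ) ≤ ((k + N : ℕ) : ℝ) := by exact_mod_cast Nat.one_le_iff_ne_zero.2 (by omega)
        positivity
      rw [mul_one_div, le_div_iff₀ hpos]
      have := mono k
      rw [Nat.add_comm N k] at this
      linarith
  exact (summable_nat_add_iff N).1 tail

/-- for t ≥ 0, the series Σ_n φ²_{n,m} t^n converges iff t ≤ 2/27. -/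
theorem Z2_radius (m : ℕ) (t : ℝ) (ht : 0 ≤ t) :
    Summable (fun n : ℕ => phi2 n m * t ^ n) ↔ t ≤ 2 / 27 := by
  constructor
  · intro hs
    by_contra hlt
    push_neg at hlt
    have ht' : 0 < t := lt_trans (by norm_num) hlt
    set r : ℝ := (1 + 27 * t / 2) / 2 with hr
    have hr1 : 1 < r := by rw [hr]; linarith
    have hε : 0 < 27 * t / 2 - r := by rw [hr]; linarith
    obtain ⟨N₀, hN₀⟩ := exists_nat_gt (3 * r / (27 * t / 2 - r))
    have hpos : ∀ n, 0 < phi2 n m * t ^ n := fun n =>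
      mul_pos (phi2_pos n m) (pow_pos ht' n)
    refine not_summable_of_ratio_norm_eventually_ge hr1 ?_ ?_ hs
    · exact Filter.Eventually.frequently (Filter.Eventually.of_forall fun n =>
        norm_ne_zero_iff.2 (hpos n).ne')
    · filter_upwards [Filter.eventually_ge_atTop N₀] with n hn
      rw [Real.norm_eq_abs, Real.norm_eq_abs, abs_of_pos (hpos n), abs_of_pos (hpos (n + 1))]
      have hden : (0 : ℝ) < (n + 1) * (2 * m + 2 * n + 3) * (2 * m + 2 * n + 4) := by positivity
      have hp : phi2 (n + 1) m =
          phi2 n m * (2 * ((2 * m + 3 * n + 1) * (2 * m + 3 * n + 2) * (2 * m + 3 * n + 3))) /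
            ((n + 1) * (2 * m + 2 * n + 3) * (2 * m + 2 * n + 4)) := by
        rw [eq_div_iff hden.ne']
        exact phi2_succ n m
      have key : (27 * n * ((n + 1) * (2 * m + 2 * n + 3) * (2 * m + 2 * n + 4)) : ℝ) ≤
          4 * ((2 * m + 3 * n + 1) * (2 * m + 3 * n + 2) * (2 * m + 3 * n + 3)) * (n + 3) := by
        exact_mod_cast ineq_lower n m
      -- from n ≥ N₀ > 3r/ε : r*(n+3) ≤ (27t/2)*n
      have hn' : (3 * r / (27 * t / 2 - r)) < (n : ℝ) :=
        lt_of_lt_of_le hN₀ (by exact_mod_cast hn)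
      have hrn : r * ((n : ℝ) + 3) ≤ 27 * t / 2 * n := by
        rw [div_lt_iff₀ hε] at hn'
        nlinarith
      have hphit : (0 : ℝ) < phi2 n m * t ^ n := hpos n
      have h1 : 27 * t / 2 * n * ((n + 1) * (2 * m + 2 * n + 3) * (2 * m + 2 * n + 4)) ≤
          2 * ((2 * m + 3 * n + 1) * (2 * m + 3 * n + 2) * (2 * m + 3 * n + 3)) * t
            * ((n : ℝ) + 3) := by
        nlinarith [mul_le_mul_of_nonneg_left key (show (0:ℝ) ≤ t / 2 by positivity)]
      have h2 := mul_le_mul_of_nonneg_right hrn hden.le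
      have h3 : r * ((n + 1) * (2 * m + 2 * n + 3) * (2 * m + 2 * n + 4)) * ((n : ℝ) + 3) ≤
          2 * ((2 * m + 3 * n + 1) * (2 * m + 3 * n + 2) * (2 * m + 3 * n + 3)) * t
            * ((n : ℝ) + 3) := by linarith
      have hrd : r * ((n + 1) * (2 * m + 2 * n + 3) * (2 * m + 2 * n + 4)) ≤
          2 * ((2 * m + 3 * n + 1) * (2 * m + 3 * n + 2) * (2 * m + 3 * n + 3)) * t :=
        le_of_mul_le_mul_right h3 (by positivity)
      refine le_of_mul_le_mul_right ?_ hden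
      calc r * (phi2 n m * t ^ n) * ((n + 1) * (2 * m + 2 * n + 3) * (2 * m + 2 * n + 4))
          = (phi2 n m * t ^ n) *
            (r * ((n + 1) * (2 * m + 2 * n + 3) * (2 * m + 2 * n + 4))) := by ring
        _ ≤ (phi2 n m * t ^ n) *
            (2 * ((2 * m + 3 * n + 1) * (2 * m + 3 * n + 2) * (2 * m + 3 * n + 3)) * t) :=
            mul_le_mul_of_nonneg_left hrd hphit.le
        _ = phi2 (n + 1) m * t ^ (n + 1) *
            ((n + 1) * (2 * m + 2 * n + 3) * (2 * m + 2 * n + 4)) := by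
            rw [pow_succ]
            linear_combination (-(t ^ n * t)) * phi2_succ n m
  · intro hle
    refine Summable.of_nonneg_of_le (fun n => ?_) (fun n => ?_) (summable_boundary m)
    · have := (phi2_pos n m).le; positivity
    · exact mul_le_mul_of_nonneg_left (pow_le_pow_left₀ ht hle n) (phi2_pos n m).le
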